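/- Let J : ℝⁿ → ℝ ∪ {+∞} be proper convex lower semicontinuous, and for data x let y(x) denote the unique minimizer of E(y;x) = (1/2)‖y − x‖² + J(y). Suppose there exists ξ† ∈ ∂J(y(x†)) and a constant c ∈ (0,1) such that ⟨ξ†, y(x†) − y⟩ ≤ c‖y − y(x†)‖² for all y ∈ ℝⁿ. Then for any xᵟ with ‖xᵟ − x†‖ ≤ δ, one has ‖y(xᵟ) − y(x†)‖ ≤ δ/(1−c). -/

import Mathlib

open scoped InnerProductSpace

/-!
Minimality and convexity give the first-order conditions `x − y(x) ∈ ∂J(y(x))`. Adding them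
for `x†` and `xᵟ`, the values of `J` cancel and the proximal map turns out to be firmly
nonexpansive, `‖y(xᵟ) − y(x†)‖² ≤ ⟪xᵟ − x†, y(xᵟ) − y(x†)⟫`, so by Cauchy–Schwarz
`‖y(xᵟ) − y(x†)‖ ≤ δ ≤ δ / (1 − c)`.
-/

/-- The energy `E(y;x) = (1/2)‖y − x‖² + J(y)` with extended-real `J`. -/
noncomputable def Efun {n : ℕ} (J : EuclideanSpace ℝ (Fin n) → EReal)
    (x y : EuclideanSpace ℝ (Fin n)) : EReal :=
  (((1/2) * ‖y - x‖^2 : ℝ) : EReal) + J y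

lemma nonneg_of_forall_nonneg_add_mul {C K : ℝ}
    (h : ∀ t : ℝ, 0 < t → t ≤ 1 → 0 ≤ C + t * K) : 0 ≤ C := by
  have hlim :
      Filter.Tendsto (fun t : ℝ => C + t * K) (nhdsWithin 0 (Set.Ioi 0)) (nhds C) :=
    ((by fun_prop : Continuous fun t : ℝ => C + t * K).tendsto' 0 C (by simp)).mono_left
      nhdsWithin_le_nhds
  refine ge_of_tendsto hlim ?_
  filter_upwards [Ioo_mem_nhdsGT zero_lt_one] with t ht using h t ht.1 ht.2.le

section Prox

variable {E : Type*} [NormedAddCommGroup E]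

lemma ne_top_of_forall_half_sq_add_le {J : E → EReal} (hproper : ∃ y, J y ≠ ⊤) {x y₀ : E}
    (hmin : ∀ y, (((1/2) * ‖y₀ - x‖^2 : ℝ) : EReal) + J y₀
      ≤ (((1/2) * ‖y - x‖^2 : ℝ) : EReal) + J y) :
    J y₀ ≠ ⊤ := by
  obtain ⟨y, hy⟩ := hproper
  intro htop
  have h := hmin y
  rw [htop, EReal.add_top_of_ne_bot (EReal.coe_ne_bot _), top_le_iff] at h
  exact (EReal.add_lt_top (EReal.coe_ne_top _) hy).ne h

variable [InnerProductSpace ℝ E]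

/-- First-order optimality for the proximal problem: `x − y₀ ∈ ∂J(y₀)`, tested at a point `z`
where `J` is finite. -/
lemma add_inner_le_of_forall_half_sq_add_le {J : E → EReal}
    (hconv : ∀ y z : E, ∀ t : ℝ, 0 ≤ t → t ≤ 1 →
      J (t • y + (1 - t) • z) ≤ (t : EReal) * J y + ((1 - t : ℝ) : EReal) * J z)
    {x y₀ z : E} {a b : ℝ} (ha : J y₀ = a) (hb : J z = b)
    (hmin : ∀ y, (((1/2) * ‖y₀ - x‖^2 : ℝ) : EReal) + J y₀
      ≤ (((1/2) * ‖y - x‖^2 : ℝ) : EReal) + J y) :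
    a + ⟪x - y₀, z - y₀⟫_ℝ ≤ b := by
  suffices 0 ≤ ⟪y₀ - x, z - y₀⟫_ℝ + (b - a) by
    have hneg : ⟪x - y₀, z - y₀⟫_ℝ = -⟪y₀ - x, z - y₀⟫_ℝ := by
      rw [← inner_neg_left, neg_sub]
    linarith
  refine nonneg_of_forall_nonneg_add_mul (K := ‖z - y₀‖^2 / 2) fun t ht ht1 => ?_
  have hseg : (((1/2) * ‖y₀ - x‖^2 : ℝ) : EReal) + a
      ≤ (((1/2) * ‖t • z + (1 - t) • y₀ - x‖^2 : ℝ) : EReal)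
        + ((t * b + (1 - t) * a : ℝ) : EReal) := by
    calc (((1/2) * ‖y₀ - x‖^2 : ℝ) : EReal) + a
        ≤ (((1/2) * ‖t • z + (1 - t) • y₀ - x‖^2 : ℝ) : EReal)
          + J (t • z + (1 - t) • y₀) := by
          rw [← ha]; exact hmin _
      _ ≤ _ := by
          grw [hconv z y₀ t ht.le ht1, ha, hb]
          norm_cast
  norm_cast at hseg
  have hsplit : t • z + (1 - t) • y₀ - x = (y₀ - x) + t • (z - y₀) := by module
  rw [hsplit, norm_add_sq_real, real_inner_smul_right, norm_smul, Real.norm_eq_abs,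
    abs_of_pos ht, mul_pow] at hseg
  have hscaled : 0 ≤ t * (⟪y₀ - x, z - y₀⟫_ℝ + (b - a) + t * (‖z - y₀‖^2 / 2)) := by
    nlinarith
  exact nonneg_of_mul_nonneg_right hscaled ht

lemma norm_sub_le_of_add_inner_le {x₁ x₂ y₁ y₂ : E} {a b : ℝ}
    (h₁ : a + ⟪x₁ - y₁, y₂ - y₁⟫_ℝ ≤ b) (h₂ : b + ⟪x₂ - y₂, y₁ - y₂⟫_ℝ ≤ a) :
    ‖y₂ - y₁‖ ≤ ‖x₂ - x₁‖ := by
  have hmono : ‖y₂ - y₁‖^2 ≤ ⟪x₂ - x₁, y₂ - y₁⟫_ℝ := by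
    have hsum : ⟪x₂ - x₁, y₂ - y₁⟫_ℝ - ‖y₂ - y₁‖^2
        = -(⟪x₁ - y₁, y₂ - y₁⟫_ℝ + ⟪x₂ - y₂, y₁ - y₂⟫_ℝ) := by
      rw [← real_inner_self_eq_norm_sq]
      simp only [inner_sub_left, inner_sub_right, real_inner_comm]
      ring
    linarith
  have hcs := real_inner_le_norm (x₂ - x₁) (y₂ - y₁)
  nlinarith [norm_nonneg (y₂ - y₁), norm_nonneg (x₂ - x₁)]

end Prox

theorem stmt1_general (n : ℕ) (J : EuclideanSpace ℝ (Fin n) → EReal)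
    (hproper : ∃ y, J y ≠ ⊤) (hnotbot : ∀ y, J y ≠ ⊥)
    (hconv : ∀ y z : EuclideanSpace ℝ (Fin n), ∀ t : ℝ, 0 ≤ t → t ≤ 1 →
      J (t • y + (1 - t) • z) ≤ (t : EReal) * J y + ((1 - t : ℝ) : EReal) * J z)
    (xdag xdel ydag ydel : EuclideanSpace ℝ (Fin n)) (c δ : ℝ)
    (hc0 : 0 < c) (hc1 : c < 1)
    (hmin_dag : ∀ y, Efun J xdag ydag ≤ Efun J xdag y)
    (hmin_del : ∀ y, Efun J xdel ydel ≤ Efun J xdel y)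
    (hnoise : ‖xdel - xdag‖ ≤ δ) :
    ‖ydel - ydag‖ ≤ δ / (1 - c) := by
  have ha := EReal.coe_toReal (ne_top_of_forall_half_sq_add_le hproper hmin_dag) (hnotbot ydag)
  have hb := EReal.coe_toReal (ne_top_of_forall_half_sq_add_le hproper hmin_del) (hnotbot ydel)
  have hprox : ‖ydel - ydag‖ ≤ ‖xdel - xdag‖ := norm_sub_le_of_add_inner_le
    (add_inner_le_of_forall_half_sq_add_le hconv ha.symm hb.symm hmin_dag)
    (add_inner_le_of_forall_half_sq_add_le hconv hb.symm ha.symm hmin_del)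
  calc ‖ydel - ydag‖ ≤ δ := hprox.trans hnoise
    _ ≤ δ / (1 - c) := le_div_self ((norm_nonneg _).trans hnoise) (by linarith) (by linarith)

/-- linear stability rate under the quadratic variational source
condition.  If `ξ† ∈ ∂J(y†)` satisfies `⟪ξ†, y† − y⟫ ≤ c‖y − y†‖²` for all `y`
with `c ∈ (0,1)`, and `y†`, `yᵟ` minimize `E(·;x†)`, `E(·;xᵟ)` respectively with
`‖xᵟ − x†‖ ≤ δ`, then `‖yᵟ − y†‖ ≤ δ/(1−c)`. -/
theorem stmt1 (n : ℕ) (J : EuclideanSpace ℝ (Fin n) → EReal)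
    (hproper : ∃ y, J y ≠ ⊤) (hnotbot : ∀ y, J y ≠ ⊥)
    (hconv : ∀ y z : EuclideanSpace ℝ (Fin n), ∀ t : ℝ, 0 ≤ t → t ≤ 1 →
      J (t • y + (1 - t) • z) ≤ (t : EReal) * J y + ((1 - t : ℝ) : EReal) * J z)
    (hlsc : LowerSemicontinuous J)
    (xdag xdel ydag ydel ξ : EuclideanSpace ℝ (Fin n)) (c δ : ℝ)
    (hc0 : 0 < c) (hc1 : c < 1)
    (hmin_dag : ∀ y, Efun J xdag ydag ≤ Efun J xdag y)
    (hmin_del : ∀ y, Efun J xdel ydel ≤ Efun J xdel y)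
    (hsub : ∀ z, J ydag + ((⟪ξ, z - ydag⟫_ℝ : ℝ) : EReal) ≤ J z)
    (hvsc : ∀ y, ⟪ξ, ydag - y⟫_ℝ ≤ c * ‖y - ydag‖^2)
    (hnoise : ‖xdel - xdag‖ ≤ δ) :
    ‖ydel - ydag‖ ≤ δ / (1 - c) :=
  stmt1_general n J hproper hnotbot hconv xdag xdel ydag ydel c δ hc0 hc1 hmin_dag hmin_del hnoise
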